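/- Let U ⊆ ℝ² be an open set and f : U → ℝ a smooth function whose partial derivatives f_x and f_y are nowhere zero on U. Set H = f_{xy}/(f_x·f_y), ∂₁ = −(1/f_x)·∂/∂x, ∂₂ = −(1/f_y)·∂/∂y. If a smooth function σ₁ : U → ℝ satisfies ∂₂(σ₁) = H on U, then ∂₂(∂₁(σ₁)) = ∂₁(H) − H² + H·∂₁(σ₁) on U. -/

import Mathlib

/-- Partial derivative with respect to the first coordinate. -/
noncomputable def pdx (f : ℝ × ℝ → ℝ) : ℝ × ℝ → ℝ :=
  fun q => deriv (fun t => f (t, q.2)) q.1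

/-- Partial derivative with respect to the second coordinate. -/
noncomputable def pdy (f : ℝ × ℝ → ℝ) : ℝ × ℝ → ℝ :=
  fun q => deriv (fun t => f (q.1, t)) q.2

/-- The vector field `∂₁ = -(1/f_x)·∂/∂x` applied to a function `p`. -/
noncomputable def D1 (f p : ℝ × ℝ → ℝ) : ℝ × ℝ → ℝ :=
  fun q => -(pdx p q) / pdx f q

/-- The vector field `∂₂ = -(1/f_y)·∂/∂y` applied to a function `p`. -/
noncomputable def D2 (f p : ℝ × ℝ → ℝ) : ℝ × ℝ → ℝ :=
  fun q => -(pdy p q) / pdy f q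

/-- `H = f_{xy}/(f_x·f_y)`. -/
noncomputable def Hf (f : ℝ × ℝ → ℝ) : ℝ × ℝ → ℝ :=
  fun q => pdy (pdx f) q / (pdx f q * pdy f q)

/-- A differential 1-form `a dx + c dy` on (an open subset of) `ℝ²`, recorded by its
pair of coefficient functions `(a, c)`. -/
abbrev Form1 : Type := (ℝ × ℝ → ℝ) × (ℝ × ℝ → ℝ)

/-- The coefficient of `dx ∧ dy` in the wedge product of two 1-forms. -/
noncomputable def wedge (α β : Form1) : ℝ × ℝ → ℝ :=
  fun q => α.1 q * β.2 q - α.2 q * β.1 q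

/-- The coefficient of `dx ∧ dy` in the exterior derivative of a 1-form. -/
noncomputable def extd (α : Form1) : ℝ × ℝ → ℝ :=
  fun q => pdx α.2 q - pdy α.1 q

/-- Multiplication of a 1-form by a function. -/
noncomputable def smul1 (s : ℝ × ℝ → ℝ) (α : Form1) : Form1 :=
  (fun q => s q * α.1 q, fun q => s q * α.2 q)

/-- The coordinate 1-form `dx`. -/
noncomputable def dX : Form1 := (fun _ => 1, fun _ => 0)

/-- The coordinate 1-form `dy`. -/
noncomputable def dY : Form1 := (fun _ => 0, fun _ => 1)

open Filter Topology

private lemma diffAt_of_contDiffOn {F : Type*} [NormedAddCommGroup F] [NormedSpace ℝ F]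
    {g : ℝ × ℝ → F} {U : Set (ℝ × ℝ)} {q : ℝ × ℝ}
    (hU : IsOpen U) (hg : ContDiffOn ℝ (⊤ : ℕ∞) g U) (hq : q ∈ U) :
    DifferentiableAt ℝ g q :=
  (hg.differentiableOn (by simp)).differentiableAt (hU.mem_nhds hq)

private lemma hasDerivAt_pdx {g : ℝ × ℝ → ℝ} {q : ℝ × ℝ} (h : DifferentiableAt ℝ g q) :
    HasDerivAt (fun t => g (t, q.2)) (pdx g q) q.1 := by
  have hl : DifferentiableAt ℝ (fun t : ℝ => ((t, q.2) : ℝ × ℝ)) q.1 :=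
    differentiableAt_id.prodMk (differentiableAt_const _)
  have h' : DifferentiableAt ℝ g ((q.1, q.2) : ℝ × ℝ) := by rwa [Prod.mk.eta]
  exact (h'.comp q.1 hl).hasDerivAt

private lemma hasDerivAt_pdy {g : ℝ × ℝ → ℝ} {q : ℝ × ℝ} (h : DifferentiableAt ℝ g q) :
    HasDerivAt (fun t => g (q.1, t)) (pdy g q) q.2 := by
  have hl : DifferentiableAt ℝ (fun t : ℝ => ((q.1, t) : ℝ × ℝ)) q.2 :=
    (differentiableAt_const _).prodMk differentiableAt_id
  have h' : DifferentiableAt ℝ g ((q.1, q.2) : ℝ × ℝ) := by rwa [Prod.mk.eta]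
  exact (h'.comp q.2 hl).hasDerivAt

private lemma pdx_eq_fderiv {g : ℝ × ℝ → ℝ} {q : ℝ × ℝ} (h : DifferentiableAt ℝ g q) :
    pdx g q = fderiv ℝ g q (1, 0) := by
  have hl : HasDerivAt (fun t : ℝ => ((t, q.2) : ℝ × ℝ)) ((1 : ℝ), (0 : ℝ)) q.1 :=
    (hasDerivAt_id q.1).prodMk (hasDerivAt_const q.1 q.2)
  have h' : HasFDerivAt g (fderiv ℝ g q) ((q.1, q.2) : ℝ × ℝ) := by
    rw [Prod.mk.eta]; exact h.hasFDerivAt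
  exact (h'.comp_hasDerivAt q.1 hl).deriv.symm ▸ rfl

private lemma pdy_eq_fderiv {g : ℝ × ℝ → ℝ} {q : ℝ × ℝ} (h : DifferentiableAt ℝ g q) :
    pdy g q = fderiv ℝ g q (0, 1) := by
  have hl : HasDerivAt (fun t : ℝ => ((q.1, t) : ℝ × ℝ)) ((0 : ℝ), (1 : ℝ)) q.2 :=
    (hasDerivAt_const q.2 q.1).prodMk (hasDerivAt_id q.2)
  have h' : HasFDerivAt g (fderiv ℝ g q) ((q.1, q.2) : ℝ × ℝ) := by
    rw [Prod.mk.eta]; exact h.hasFDerivAt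
  exact (h'.comp_hasDerivAt q.2 hl).deriv.symm ▸ rfl

private lemma contDiffOn_pdx {g : ℝ × ℝ → ℝ} {U : Set (ℝ × ℝ)}
    (hU : IsOpen U) (hg : ContDiffOn ℝ (⊤ : ℕ∞) g U) :
    ContDiffOn ℝ (⊤ : ℕ∞) (pdx g) U := by
  have hF : ContDiffOn ℝ (⊤ : ℕ∞) (fderiv ℝ g) U :=
    hg.fderiv_of_isOpen hU (by exact_mod_cast le_top)
  have h2 : ContDiffOn ℝ (⊤ : ℕ∞) (fun p => fderiv ℝ g p ((1 : ℝ), (0 : ℝ))) U :=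
    hF.clm_apply contDiffOn_const
  exact h2.congr fun p hp => pdx_eq_fderiv (diffAt_of_contDiffOn hU hg hp)

private lemma contDiffOn_pdy {g : ℝ × ℝ → ℝ} {U : Set (ℝ × ℝ)}
    (hU : IsOpen U) (hg : ContDiffOn ℝ (⊤ : ℕ∞) g U) :
    ContDiffOn ℝ (⊤ : ℕ∞) (pdy g) U := by
  have hF : ContDiffOn ℝ (⊤ : ℕ∞) (fderiv ℝ g) U :=
    hg.fderiv_of_isOpen hU (by exact_mod_cast le_top)
  have h2 : ContDiffOn ℝ (⊤ : ℕ∞) (fun p => fderiv ℝ g p ((0 : ℝ), (1 : ℝ))) U :=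
    hF.clm_apply contDiffOn_const
  exact h2.congr fun p hp => pdy_eq_fderiv (diffAt_of_contDiffOn hU hg hp)

private lemma schwarz {g : ℝ × ℝ → ℝ} {U : Set (ℝ × ℝ)} {q : ℝ × ℝ}
    (hU : IsOpen U) (hg : ContDiffOn ℝ (⊤ : ℕ∞) g U) (hq : q ∈ U) :
    pdy (pdx g) q = pdx (pdy g) q := by
  have hF : ContDiffOn ℝ (⊤ : ℕ∞) (fderiv ℝ g) U :=
    hg.fderiv_of_isOpen hU (by exact_mod_cast le_top)
  have hF' : DifferentiableAt ℝ (fderiv ℝ g) q := diffAt_of_contDiffOn hU hF hq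
  have hev : ∀ᶠ p in 𝓝 q, HasFDerivAt g (fderiv ℝ g p) p :=
    Filter.eventually_of_mem (hU.mem_nhds hq) fun p hp =>
      (diffAt_of_contDiffOn hU hg hp).hasFDerivAt
  have hsymm := second_derivative_symmetric_of_eventually hev hF'.hasFDerivAt
  -- pdy (pdx g) q = f'' (0,1) (1,0)
  have hxev : (pdx g) =ᶠ[𝓝 q] fun p => fderiv ℝ g p ((1 : ℝ), (0 : ℝ)) :=
    Filter.eventually_of_mem (hU.mem_nhds hq) fun p hp =>
      pdx_eq_fderiv (diffAt_of_contDiffOn hU hg hp)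
  have hyev : (pdy g) =ᶠ[𝓝 q] fun p => fderiv ℝ g p ((0 : ℝ), (1 : ℝ)) :=
    Filter.eventually_of_mem (hU.mem_nhds hq) fun p hp =>
      pdy_eq_fderiv (diffAt_of_contDiffOn hU hg hp)
  have hcy : Tendsto (fun t : ℝ => ((q.1, t) : ℝ × ℝ)) (𝓝 q.2) (𝓝 q) := by
    have : Continuous (fun t : ℝ => ((q.1, t) : ℝ × ℝ)) := continuous_const.prodMk continuous_id
    simpa [Prod.mk.eta] using this.tendsto q.2
  have hcx : Tendsto (fun t : ℝ => ((t, q.2) : ℝ × ℝ)) (𝓝 q.1) (𝓝 q) := by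
    have : Continuous (fun t : ℝ => ((t, q.2) : ℝ × ℝ)) := continuous_id.prodMk continuous_const
    simpa [Prod.mk.eta] using this.tendsto q.1
  have h1 : pdy (pdx g) q = fderiv ℝ (fderiv ℝ g) q (0, 1) (1, 0) := by
    have hline : HasDerivAt (fun t : ℝ => ((q.1, t) : ℝ × ℝ)) ((0 : ℝ), (1 : ℝ)) q.2 :=
      (hasDerivAt_const q.2 q.1).prodMk (hasDerivAt_id q.2)
    have hFq : HasFDerivAt (fderiv ℝ g) (fderiv ℝ (fderiv ℝ g) q) ((q.1, q.2) : ℝ × ℝ) := by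
      rw [Prod.mk.eta]; exact hF'.hasFDerivAt
    have hc : HasDerivAt (fun t : ℝ => fderiv ℝ g ((q.1, t) : ℝ × ℝ))
        (fderiv ℝ (fderiv ℝ g) q ((0 : ℝ), (1 : ℝ))) q.2 := hFq.comp_hasDerivAt q.2 hline
    have hca : HasDerivAt (fun t : ℝ => fderiv ℝ g ((q.1, t) : ℝ × ℝ) ((1 : ℝ), (0 : ℝ)))
        (fderiv ℝ (fderiv ℝ g) q ((0 : ℝ), (1 : ℝ)) ((1 : ℝ), (0 : ℝ))) q.2 := by
      simpa using hc.clm_apply (hasDerivAt_const q.2 ((1 : ℝ), (0 : ℝ)))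
    have heq' : (fun t : ℝ => pdx g ((q.1, t) : ℝ × ℝ)) =ᶠ[𝓝 q.2]
        (fun t : ℝ => fderiv ℝ g ((q.1, t) : ℝ × ℝ) ((1 : ℝ), (0 : ℝ))) :=
      hcy.eventually hxev
    show deriv (fun t => pdx g (q.1, t)) q.2 = _
    rw [heq'.deriv_eq, hca.deriv]
  have h2 : pdx (pdy g) q = fderiv ℝ (fderiv ℝ g) q (1, 0) (0, 1) := by
    have hline : HasDerivAt (fun t : ℝ => ((t, q.2) : ℝ × ℝ)) ((1 : ℝ), (0 : ℝ)) q.1 :=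
      (hasDerivAt_id q.1).prodMk (hasDerivAt_const q.1 q.2)
    have hFq : HasFDerivAt (fderiv ℝ g) (fderiv ℝ (fderiv ℝ g) q) ((q.1, q.2) : ℝ × ℝ) := by
      rw [Prod.mk.eta]; exact hF'.hasFDerivAt
    have hc : HasDerivAt (fun t : ℝ => fderiv ℝ g ((t, q.2) : ℝ × ℝ))
        (fderiv ℝ (fderiv ℝ g) q ((1 : ℝ), (0 : ℝ))) q.1 := hFq.comp_hasDerivAt q.1 hline
    have hca : HasDerivAt (fun t : ℝ => fderiv ℝ g ((t, q.2) : ℝ × ℝ) ((0 : ℝ), (1 : ℝ)))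
        (fderiv ℝ (fderiv ℝ g) q ((1 : ℝ), (0 : ℝ)) ((0 : ℝ), (1 : ℝ))) q.1 := by
      simpa using hc.clm_apply (hasDerivAt_const q.1 ((0 : ℝ), (1 : ℝ)))
    have heq' : (fun t : ℝ => pdy g ((t, q.2) : ℝ × ℝ)) =ᶠ[𝓝 q.1]
        (fun t : ℝ => fderiv ℝ g ((t, q.2) : ℝ × ℝ) ((0 : ℝ), (1 : ℝ))) :=
      hcx.eventually hyev
    show deriv (fun t => pdy g (t, q.2)) q.1 = _
    rw [heq'.deriv_eq, hca.deriv]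
  rw [h1, h2, hsymm]

/-- prolongation of the first Samuelson equation: if `∂₂σ₁ = H` on
`U`, then `∂₂(∂₁σ₁) = ∂₁H - H² + H·∂₁σ₁` on `U`. -/
theorem first_prolongation_sigma1
    (U : Set (ℝ × ℝ)) (hU : IsOpen U)
    (f : ℝ × ℝ → ℝ) (hf : ContDiffOn ℝ (⊤ : ℕ∞) f U)
    (hfx : ∀ q ∈ U, pdx f q ≠ 0) (hfy : ∀ q ∈ U, pdy f q ≠ 0)
    (σ₁ : ℝ × ℝ → ℝ) (hσ₁ : ContDiffOn ℝ (⊤ : ℕ∞) σ₁ U)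
    (heq : ∀ q ∈ U, D2 f σ₁ q = Hf f q) :
    ∀ q ∈ U, D2 f (D1 f σ₁) q =
      D1 f (Hf f) q - Hf f q ^ 2 + Hf f q * D1 f σ₁ q := by
  intro q hq
  obtain ⟨x, y⟩ := q
  have hfx1 : ContDiffOn ℝ (⊤ : ℕ∞) (pdx f) U := contDiffOn_pdx hU hf
  have hfy1 : ContDiffOn ℝ (⊤ : ℕ∞) (pdy f) U := contDiffOn_pdy hU hf
  have hfxy1 : ContDiffOn ℝ (⊤ : ℕ∞) (pdy (pdx f)) U := contDiffOn_pdy hU hfx1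
  have hσx1 : ContDiffOn ℝ (⊤ : ℕ∞) (pdx σ₁) U := contDiffOn_pdx hU hσ₁
  have dfx : DifferentiableAt ℝ (pdx f) (x, y) := diffAt_of_contDiffOn hU hfx1 hq
  have dfy : DifferentiableAt ℝ (pdy f) (x, y) := diffAt_of_contDiffOn hU hfy1 hq
  have dfxy : DifferentiableAt ℝ (pdy (pdx f)) (x, y) := diffAt_of_contDiffOn hU hfxy1 hq
  have dσx : DifferentiableAt ℝ (pdx σ₁) (x, y) := diffAt_of_contDiffOn hU hσx1 hq
  have hA0 : pdx f (x, y) ≠ 0 := hfx _ hq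
  have hB0 : pdy f (x, y) ≠ 0 := hfy _ hq
  -- Schwarz for f
  have hsf : pdx (pdy f) (x, y) = pdy (pdx f) (x, y) := (schwarz hU hf hq).symm
  -- σ₁'s y-partial on U, from the first Samuelson equation
  have hσy : ∀ p ∈ U, pdy σ₁ p = -(pdy (pdx f) p) / pdx f p := by
    intro p hp
    have h := heq p hp
    simp only [D2, Hf] at h
    have h1 := hfx p hp
    have h2 := hfy p hp
    field_simp at h ⊢
    have h3 : (-(pdy σ₁ p * pdx f p)) * pdy f p = pdy (pdx f) p * pdy f p := by rw [h]
    have h4 := mul_right_cancel₀ h2 h3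
    linarith
  have hcx : Filter.Tendsto (fun t : ℝ => ((t, y) : ℝ × ℝ)) (𝓝 x) (𝓝 (x, y)) :=
    (continuous_id.prodMk continuous_const).tendsto x
  have hevU : ∀ᶠ p in 𝓝 ((x, y) : ℝ × ℝ), pdy σ₁ p = -(pdy (pdx f) p) / pdx f p :=
    Filter.eventually_of_mem (hU.mem_nhds hq) hσy
  have hev : (fun t : ℝ => pdy σ₁ (t, y)) =ᶠ[𝓝 x]
      (fun t : ℝ => -(pdy (pdx f) (t, y)) / pdx f (t, y)) := hcx.eventually hevU
  -- value of the mixed partial of σ₁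
  have hMval : pdy (pdx σ₁) (x, y) =
      (-(pdx (pdy (pdx f)) (x, y)) * pdx f (x, y) -
        -(pdy (pdx f) (x, y)) * pdx (pdx f) (x, y)) / pdx f (x, y) ^ 2 := by
    rw [schwarz hU hσ₁ hq]
    show deriv (fun t => pdy σ₁ (t, y)) x = _
    rw [hev.deriv_eq]
    exact ((hasDerivAt_pdx dfxy).neg.div (hasDerivAt_pdx dfx) hA0).deriv
  -- y-derivative of D1 f σ₁
  have hDy : pdy (D1 f σ₁) (x, y) =
      (-(pdy (pdx σ₁) (x, y)) * pdx f (x, y) -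
        -(pdx σ₁ (x, y)) * pdy (pdx f) (x, y)) / pdx f (x, y) ^ 2 := by
    show deriv (fun t => D1 f σ₁ (x, t)) y = _
    exact ((hasDerivAt_pdy dσx).neg.div (hasDerivAt_pdy dfx) hA0).deriv
  -- x-derivative of Hf f
  have hHx : pdx (Hf f) (x, y) =
      (pdx (pdy (pdx f)) (x, y) * (pdx f (x, y) * pdy f (x, y)) -
        pdy (pdx f) (x, y) * (pdx (pdx f) (x, y) * pdy f (x, y) +
          pdx f (x, y) * pdy (pdx f) (x, y))) / (pdx f (x, y) * pdy f (x, y)) ^ 2 := by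
    show deriv (fun t => Hf f (t, y)) x = _
    have h := ((hasDerivAt_pdx dfxy).div
      ((hasDerivAt_pdx dfx).mul (hasDerivAt_pdx dfy)) (mul_ne_zero hA0 hB0)).deriv
    rw [hsf] at h
    exact h
  simp only [D2, D1, Hf]
  rw [hDy, hHx, hMval]
  field_simp
  ring
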